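/- Let G be a finite connected simple graph with n ≥ 2 vertices and m edges, and let χ be an integer. If m ≤ 3(n − χ), then the bondage number satisfies b(G) ≤ 11 − 12χ/n, i.e. n·(b(G) + 1) ≤ 12(n − χ). -/

import Mathlib

/-- A finset `D` of vertices is a dominating set of `G` if every vertex not in `D`
is adjacent to some vertex in `D`. -/
def SimpleGraph.IsDominatingSet {V : Type*} (G : SimpleGraph V) (D : Finset V) : Prop :=
  ∀ v : V, v ∉ D → ∃ u ∈ D, G.Adj u v

/-- The domination number of `G`: the minimum cardinality of a dominating set. -/
noncomputable def SimpleGraph.dominationNumber {V : Type*} [Fintype V]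
    (G : SimpleGraph V) : ℕ :=
  sInf {k | ∃ D : Finset V, G.IsDominatingSet D ∧ D.card = k}

/-- The bondage number of `G`: the minimum cardinality of a set `B` of edges of `G`
whose removal increases the domination number. -/
noncomputable def SimpleGraph.bondageNumber {V : Type*} [Fintype V]
    (G : SimpleGraph V) : ℕ :=
  sInf {k | ∃ B : Finset (Sym2 V), ↑B ⊆ G.edgeSet ∧ B.card = k ∧
    G.dominationNumber < (G.deleteEdges ↑B).dominationNumber}


/-!
If `u ≠ v` have a common vertex in their closed neighbourhoods, deleting every edge at `u`
and every edge at `v` except one towards that common vertex raises the domination number, so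
`b(G) + 1 ≤ deg u + deg v`. Applied to the excess `n · deg x - 2m`, which sums to zero, a
discharging argument over the disjoint closed neighbourhoods of the vertices of non-positive
excess yields such a pair with `n (deg u + deg v) ≤ 4m`. Hence
`n (b(G) + 1) ≤ 4m ≤ 12 (n - χ)`.
-/

open Finset

lemma Finset.card_insert_erase_erase_lt {α : Type*} [DecidableEq α] {s : Finset α} {u v w : α}
    (hu : u ∈ s) (huv : u ≠ v) (h : v ∈ s ∨ w ∈ s ∧ w ≠ u) :
    #(insert w ((s.erase u).erase v)) < #s := by
  rcases em (v ∈ s) with hv | hv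
  · have := card_insert_le w ((s.erase u).erase v)
    rw [card_erase_of_mem (mem_erase.2 ⟨huv.symm, hv⟩), card_erase_of_mem hu] at this
    have := card_pos.2 ⟨v, hv⟩
    have := one_lt_card.2 ⟨u, hu, v, hv, huv⟩
    omega
  · obtain ⟨hw, hwu⟩ := h.resolve_left hv
    rw [erase_eq_of_notMem (fun h ↦ hv (mem_of_mem_erase h)),
      insert_eq_of_mem (mem_erase.2 ⟨hwu, hw⟩)]
    exact card_erase_lt_of_mem hu

namespace SimpleGraph

variable {V : Type*} [Fintype V]

lemma dominationNumber_le_card (G : SimpleGraph V) {D : Finset V} (hD : G.IsDominatingSet D) :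
    G.dominationNumber ≤ #D :=
  Nat.sInf_le ⟨D, hD, rfl⟩

lemma exists_isDominatingSet_card_eq_dominationNumber (G : SimpleGraph V) :
    ∃ D : Finset V, G.IsDominatingSet D ∧ #D = G.dominationNumber :=
  Nat.sInf_mem (s := {k | ∃ D : Finset V, G.IsDominatingSet D ∧ #D = k})
    ⟨_, univ, fun v hv ↦ absurd (mem_univ v) hv, rfl⟩

lemma bondageNumber_le_card (G : SimpleGraph V) {B : Finset (Sym2 V)} (hB : ↑B ⊆ G.edgeSet)
    (hlt : G.dominationNumber < (G.deleteEdges ↑B).dominationNumber) :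
    G.bondageNumber ≤ #B :=
  Nat.sInf_le ⟨B, hB, rfl, hlt⟩

variable [DecidableEq V] {G H : SimpleGraph V} {u v w : V}

lemma dominationNumber_lt_of_le (hHG : H ≤ G) (hu : H.IsIsolated u)
    (hv : ∀ x, H.Adj v x → x = w) (huv : u ≠ v) (hvw : G.Adj v w)
    (huw : w = u ∨ G.Adj u w) :
    G.dominationNumber < H.dominationNumber := by
  obtain ⟨D', hD', hcard⟩ := H.exists_isDominatingSet_card_eq_dominationNumber
  have huD' : u ∈ D' := by
    by_contra h
    obtain ⟨x, -, hxu⟩ := hD' u h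
    exact hu x hxu.symm
  have hvD' : v ∈ D' ∨ w ∈ D' ∧ w ≠ u := by
    by_contra! h
    obtain ⟨y, hy, hyv⟩ := hD' v h.1
    obtain rfl := hv y hyv.symm
    obtain rfl := h.2 hy
    exact hu v hyv
  -- `w` takes over the roles of `u` and `v`, both of which it dominates in `G`.
  have hD : G.IsDominatingSet (insert w ((D'.erase u).erase v)) := by
    intro x hx
    simp only [mem_insert, mem_erase, not_or, not_and_or, not_not, ne_eq] at hx
    obtain ⟨hxw, hx⟩ := hx
    rcases eq_or_ne x v with rfl | hxv
    · exact ⟨w, mem_insert_self _ _, hvw.symm⟩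
    rcases eq_or_ne x u with rfl | hxu
    · exact ⟨w, mem_insert_self _ _, (huw.resolve_left (Ne.symm hxw)).symm⟩
    obtain ⟨y, hy, hyx⟩ := hD' x (by tauto)
    have hyu : y ≠ u := by rintro rfl; exact hu x hyx
    have hyv : y ≠ v := by rintro rfl; exact hxw (hv x hyx)
    exact ⟨y, mem_insert_of_mem (mem_erase.2 ⟨hyv, mem_erase.2 ⟨hyu, hy⟩⟩), hHG hyx⟩
  calc G.dominationNumber ≤ _ := G.dominationNumber_le_card hD
    _ < #D' := card_insert_erase_erase_lt huD' huv hvD'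
    _ = _ := hcard

variable (G) [DecidableRel G.Adj]

lemma bondageNumber_add_one_le (huv : u ≠ v) (hvw : G.Adj v w) (huw : w = u ∨ G.Adj u w) :
    G.bondageNumber + 1 ≤ G.degree u + G.degree v := by
  set B := G.incidenceFinset u ∪ (G.incidenceFinset v).erase s(v, w)
  have hvw_mem : s(v, w) ∈ G.incidenceFinset v := (G.mem_incidenceFinset _ _).2 ⟨hvw, by simp⟩
  have hB : ↑B ⊆ G.edgeSet := by
    intro e he
    simp only [B, coe_union, coe_erase, Set.mem_union, Set.mem_sdiff, mem_coe,
      mem_incidenceFinset] at he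
    rcases he with h | ⟨h, -⟩ <;> exact h.1
  have hcard : #B + 1 ≤ G.degree u + G.degree v := by
    have : #B ≤ #(G.incidenceFinset u) + #((G.incidenceFinset v).erase s(v, w)) :=
      card_union_le _ _
    rw [card_erase_of_mem hvw_mem, card_incidenceFinset_eq_degree,
      card_incidenceFinset_eq_degree] at this
    have := hvw.degree_pos_left
    omega
  have hu : (G.deleteEdges ↑B).IsIsolated u := by
    intro x hx
    rw [deleteEdges_adj] at hx
    exact hx.2 (mem_union_left _ ((G.mem_incidenceFinset _ _).2 ⟨hx.1, by simp⟩))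
  have hv : ∀ x, (G.deleteEdges ↑B).Adj v x → x = w := by
    intro x hx
    rw [deleteEdges_adj] at hx
    by_contra hxw
    refine hx.2 (mem_union_right _ (mem_erase.2
      ⟨?_, (G.mem_incidenceFinset _ _).2 ⟨hx.1, by simp⟩⟩))
    simp [hxw, hx.1.ne.symm]
  have hlt := dominationNumber_lt_of_le (G.deleteEdges_le ↑B) hu hv huv hvw huw
  have := G.bondageNumber_le_card hB hlt
  omega

def closedNeighborFinset (v : V) : Finset V := insert v (G.neighborFinset v)

lemma mem_closedNeighborFinset : w ∈ G.closedNeighborFinset v ↔ w = v ∨ G.Adj v w := by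
  simp [closedNeighborFinset]

lemma self_mem_closedNeighborFinset (v : V) : v ∈ G.closedNeighborFinset v :=
  mem_insert_self _ _

lemma bondageNumber_add_one_le_of_not_disjoint (huv : u ≠ v)
    (h : ¬ Disjoint (G.closedNeighborFinset u) (G.closedNeighborFinset v)) :
    G.bondageNumber + 1 ≤ G.degree u + G.degree v := by
  obtain ⟨x, hxu, hxv⟩ := not_disjoint_iff.1 h
  rw [mem_closedNeighborFinset] at hxu hxv
  rcases hxv with rfl | hvx
  · have hux := hxu.resolve_left huv.symm
    rw [add_comm (G.degree u)]
    exact G.bondageNumber_add_one_le huv.symm hux (Or.inl rfl)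
  · exact G.bondageNumber_add_one_le huv hvx hxu

-- With `d = deg u` and `f w ≥ 1 - f u` on the neighbours,
-- the sum is at least `f u + d (1 - f u) = d + (d - 1) (-f u) ≥ d`.
lemma sum_closedNeighborFinset_pos {f : V → ℤ} (hdeg : 0 < G.degree u) (hfu : f u ≤ 0)
    (h : ∀ w, G.Adj u w → 0 < f u + f w) :
    0 < ∑ x ∈ G.closedNeighborFinset u, f x := by
  rw [closedNeighborFinset, sum_insert (by simp)]
  have hnbr : ∑ _w ∈ G.neighborFinset u, (1 - f u) ≤ ∑ w ∈ G.neighborFinset u, f w :=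
    sum_le_sum fun w hw ↦ by linarith [h w ((G.mem_neighborFinset _ _).1 hw)]
  rw [sum_const, card_neighborFinset_eq_degree, nsmul_eq_mul] at hnbr
  have : (1 : ℤ) ≤ G.degree u := by exact_mod_cast hdeg
  nlinarith

lemma exists_ne_not_disjoint_add_nonpos [Nonempty V] (hdeg : ∀ v, 0 < G.degree v) (f : V → ℤ)
    (hf : ∑ v, f v ≤ 0) :
    ∃ u v, u ≠ v ∧ ¬ Disjoint (G.closedNeighborFinset u) (G.closedNeighborFinset v) ∧
      f u + f v ≤ 0 := by
  by_contra! h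
  set L := univ.filter (f · ≤ 0)
  have hL : ∀ u ∈ L, 0 < ∑ x ∈ G.closedNeighborFinset u, f x := fun u hu ↦
    G.sum_closedNeighborFinset_pos (hdeg u) (mem_filter.1 hu).2 fun w huw ↦
      h u w huw.ne <| not_disjoint_iff.2
        ⟨u, G.self_mem_closedNeighborFinset u, G.mem_closedNeighborFinset.2 (Or.inr huw.symm)⟩
  have hdisj : (L : Set V).PairwiseDisjoint G.closedNeighborFinset := by
    intro u hu v hv huv
    by_contra hmeet
    linarith [h u v huv hmeet, (mem_filter.1 hu).2, (mem_filter.1 hv).2]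
  have hout : ∀ x ∉ L.biUnion G.closedNeighborFinset, 0 < f x := by
    intro x hx
    by_contra! hfx
    exact hx (mem_biUnion.2 ⟨x, by simpa [L] using hfx, G.self_mem_closedNeighborFinset x⟩)
  rcases L.eq_empty_or_nonempty with hL0 | hLne
  · have := sum_pos (fun x _ ↦ hout x (by simp [hL0])) univ_nonempty
    omega
  · rw [← sum_sdiff (subset_univ (L.biUnion _)), sum_biUnion hdisj] at hf
    have : 0 ≤ ∑ x ∈ univ \ L.biUnion G.closedNeighborFinset, f x :=
      sum_nonneg fun x hx ↦ (hout x (mem_sdiff.1 hx).2).le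
    have := sum_pos hL hLne
    omega

lemma exists_ne_not_disjoint_degree_add_le [Nonempty V] (hdeg : ∀ v, 0 < G.degree v) :
    ∃ u v, u ≠ v ∧ ¬ Disjoint (G.closedNeighborFinset u) (G.closedNeighborFinset v) ∧
      Fintype.card V * (G.degree u + G.degree v) ≤ 4 * #G.edgeFinset := by
  obtain ⟨u, v, huv, hmeet, hle⟩ := G.exists_ne_not_disjoint_add_nonpos hdeg
    (fun x ↦ Fintype.card V * G.degree x - 2 * #G.edgeFinset : V → ℤ) (by
      have : ∑ x, (G.degree x : ℤ) = 2 * #G.edgeFinset := by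
        exact_mod_cast G.sum_degrees_eq_twice_card_edges
      rw [sum_sub_distrib, ← mul_sum, this, sum_const, card_univ, nsmul_eq_mul]
      exact le_of_eq (by ring))
  refine ⟨u, v, huv, hmeet, ?_⟩
  zify
  linarith

end SimpleGraph

theorem stmt_7_general {V : Type*} [Fintype V] (G : SimpleGraph V)
    [DecidableRel G.Adj] (hconn : G.Connected) (hn : 2 ≤ Fintype.card V) (χ : ℤ)
    (hm : (G.edgeFinset.card : ℤ) ≤ 3 * ((Fintype.card V : ℤ) - χ)) :
    (Fintype.card V : ℤ) * (G.bondageNumber + 1) ≤ 12 * ((Fintype.card V : ℤ) - χ) := by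
  classical
  have : Nontrivial V := Fintype.one_lt_card_iff_nontrivial.1 hn
  obtain ⟨u, v, huv, hmeet, hdeg⟩ :=
    G.exists_ne_not_disjoint_degree_add_le fun v ↦ hconn.preconnected.degree_pos_of_nontrivial v
  have hb := G.bondageNumber_add_one_le_of_not_disjoint huv hmeet
  have : Fintype.card V * (G.bondageNumber + 1) ≤ 4 * #G.edgeFinset :=
    (Nat.mul_le_mul_left _ hb).trans hdeg
  zify at this
  linarith

theorem stmt_7 {V : Type*} [Fintype V] [DecidableEq V] (G : SimpleGraph V)
    [DecidableRel G.Adj] (hconn : G.Connected) (hn : 2 ≤ Fintype.card V) (χ : ℤ)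
    (hm : (G.edgeFinset.card : ℤ) ≤ 3 * ((Fintype.card V : ℤ) - χ)) :
    (Fintype.card V : ℤ) * (G.bondageNumber + 1) ≤ 12 * ((Fintype.card V : ℤ) - χ) :=
  stmt_7_general G hconn hn χ hm
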